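/- For every interval-poset I of size n ≥ 1 there exists exactly one pair (I1,I2) of interval-posets (of sizes k1 and k2 with k1 + k2 = n − 1) such that I ∈ 𝔹(I1,I2). Consequently the sets 𝔹(I1,I2), over all pairs of interval-posets with k1 + k2 = n − 1, form a set partition of the set of interval-posets of size n. -/

import Mathlib

/-- An interval-poset: a partial order on `{1, …, n}` in which, whenever
`a ⊴ c` and `a < c`, all `a < b < c` satisfy `b ⊴ c`, and whenever `c ⊴ a` and
`a < c`, all `a < b < c` satisfy `b ⊴ a`.  `rel x y` means "`x` is below `y`". -/
structure IntervalPoset : Type where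
  n : ℕ
  rel : ℕ → ℕ → Prop
  supp : ∀ a b, rel a b → 1 ≤ a ∧ a ≤ n ∧ 1 ≤ b ∧ b ≤ n
  refl : ∀ a, 1 ≤ a → a ≤ n → rel a a
  antisymm : ∀ a b, rel a b → rel b a → a = b
  trans : ∀ a b c, rel a b → rel b c → rel a c
  incCond : ∀ a b c, rel a c → a < b → b < c → rel b c
  decCond : ∀ a b c, rel c a → a < b → b < c → rel b a

/-- The composition `𝔹(I1, I2)` of two interval-posets: all interval-posets
`I` of size `I1.n + I2.n + 1` whose induced subposet on `{1, …, k1}` is `I1`,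
whose induced subposet on `{k1+2, …, k1+k2+1}` is `I2` shifted by `k1+1`, with
`i ⊴ k1+1` for all `i ≤ k1` and `k1+1 ⊴ j` for no `j > k1+1`. -/
def comp (I1 I2 : IntervalPoset) : Set IntervalPoset :=
  {I | I.n = I1.n + I2.n + 1 ∧
    (∀ a b, 1 ≤ a → a ≤ I1.n → 1 ≤ b → b ≤ I1.n → (I.rel a b ↔ I1.rel a b)) ∧
    (∀ a b, 1 ≤ a → a ≤ I2.n → 1 ≤ b → b ≤ I2.n →
      (I.rel (a + I1.n + 1) (b + I1.n + 1) ↔ I2.rel a b)) ∧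
    (∀ i, 1 ≤ i → i ≤ I1.n → I.rel i (I1.n + 1)) ∧
    (∀ j, I1.n + 1 < j → ¬ I.rel (I1.n + 1) j)}

/-! An interval-poset `I` of size `n ≥ 1` has a unique *root*: an element `m` lying above every
`i < m` and below no `j > m`. It is the largest `m` lying above all of `1, …, m - 1`; anything
above it would, by transitivity and the increasing condition, lie above everything before it.
Membership `I ∈ 𝔹(I1, I2)` says precisely that `|I1| + 1` is the root of `I` and that `I1`, `I2`
are the induced subposets on either side of it, so the pair `(I1, I2)` is forced. -/

namespace IntervalPoset

theorem ext : ∀ {A B : IntervalPoset}, A.n = B.n → A.rel = B.rel → A = B := by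
  rintro ⟨⟩ ⟨⟩ rfl rfl
  rfl

def IsRoot (I : IntervalPoset) (m : ℕ) : Prop :=
  1 ≤ m ∧ m ≤ I.n ∧ (∀ i, 1 ≤ i → i < m → I.rel i m) ∧ ∀ j, m < j → ¬ I.rel m j

theorem IsRoot.unique {I : IntervalPoset} {m m' : ℕ} (h : I.IsRoot m) (h' : I.IsRoot m') :
    m = m' := by
  obtain ⟨hm1, -, hbelow, habove⟩ := h
  obtain ⟨hm1', -, hbelow', habove'⟩ := h'
  rcases lt_trichotomy m m' with hlt | heq | hgt
  · exact absurd (hbelow' m hm1 hlt) (habove m' hlt)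
  · exact heq
  · exact absurd (hbelow m' hm1' hgt) (habove' m hgt)

theorem exists_isRoot (I : IntervalPoset) (hn : 1 ≤ I.n) : ∃ m, I.IsRoot m := by
  classical
  let P : ℕ → Prop := fun k => 1 ≤ k ∧ ∀ i, 1 ≤ i → i < k → I.rel i k
  have hP1 : P 1 := ⟨le_rfl, fun i h1 h2 => by omega⟩
  set m := Nat.findGreatest P I.n
  have hPm : P m := Nat.findGreatest_spec hn hP1
  refine ⟨m, hPm.1, Nat.findGreatest_le _, hPm.2, fun j hj hrel => ?_⟩
  have hPj : P j := by
    refine ⟨by omega, fun i h1 h2 => ?_⟩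
    rcases lt_trichotomy i m with hlt | rfl | hgt
    · exact I.trans i m j (hPm.2 i h1 hlt) hrel
    · exact hrel
    · exact I.incCond m i j hrel hgt h2
  exact Nat.findGreatest_is_greatest hj (I.supp m j hrel).2.2.2 hPj

def restrictLeft (I : IntervalPoset) (k : ℕ) (hk : k ≤ I.n) : IntervalPoset where
  n := k
  rel a b := a ≤ k ∧ b ≤ k ∧ I.rel a b
  supp a b h := by have := I.supp a b h.2.2; omega
  refl a h1 h2 := ⟨h2, h2, I.refl a h1 (h2.trans hk)⟩
  antisymm a b h1 h2 := I.antisymm a b h1.2.2 h2.2.2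
  trans a b c h1 h2 := ⟨h1.1, h2.2.1, I.trans a b c h1.2.2 h2.2.2⟩
  incCond a b c h hab hbc := ⟨by omega, h.2.1, I.incCond a b c h.2.2 hab hbc⟩
  decCond a b c h hab hbc := ⟨by omega, h.2.1, I.decCond a b c h.2.2 hab hbc⟩

def restrictRight (I : IntervalPoset) (m : ℕ) : IntervalPoset where
  n := I.n - m
  rel a b := 1 ≤ a ∧ a ≤ I.n - m ∧ 1 ≤ b ∧ b ≤ I.n - m ∧ I.rel (a + m) (b + m)
  supp a b h := ⟨h.1, h.2.1, h.2.2.1, h.2.2.2.1⟩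
  refl a h1 h2 := ⟨h1, h2, h1, h2, I.refl (a + m) (by omega) (by omega)⟩
  antisymm a b h1 h2 := by
    have := I.antisymm _ _ h1.2.2.2.2 h2.2.2.2.2
    omega
  trans a b c h1 h2 := ⟨h1.1, h1.2.1, h2.2.2.1, h2.2.2.2.1, I.trans _ _ _ h1.2.2.2.2 h2.2.2.2.2⟩
  incCond a b c h hab hbc := by
    obtain ⟨ha1, -, hc1, hc2, hr⟩ := h
    exact ⟨by omega, by omega, hc1, hc2, I.incCond _ (b + m) _ hr (by omega) (by omega)⟩
  decCond a b c h hab hbc := by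
    obtain ⟨-, hc2, ha1, ha2, hr⟩ := h
    exact ⟨by omega, by omega, ha1, ha2, I.decCond _ (b + m) _ hr (by omega) (by omega)⟩

theorem mem_comp_restrict {I : IntervalPoset} {k : ℕ} (hroot : I.IsRoot (k + 1)) :
    I ∈ comp (I.restrictLeft k (by have := hroot.2.1; omega)) (I.restrictRight (k + 1)) := by
  obtain ⟨-, hkn, hbelow, habove⟩ := hroot
  refine ⟨?_, fun a b _ ha _ hb => ?_, fun a b ha1 ha2 hb1 hb2 => ?_, fun i hi1 hi2 =>
    hbelow i hi1 (by simp only [restrictLeft] at hi2; omega), fun j hj => habove j hj⟩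
  · simp only [restrictLeft, restrictRight]
    omega
  · exact ⟨fun h => ⟨ha, hb, h⟩, fun h => h.2.2⟩
  · simp only [restrictLeft, restrictRight] at ha2 hb2 ⊢
    rw [add_assoc a, add_assoc b]
    exact ⟨fun h => ⟨ha1, ha2, hb1, hb2, h⟩, fun h => h.2.2.2.2⟩

variable {I I1 I2 : IntervalPoset}

theorem isRoot_of_mem_comp (h : I ∈ comp I1 I2) : I.IsRoot (I1.n + 1) := by
  obtain ⟨hn, -, -, hbelow, habove⟩ := h
  exact ⟨by omega, by omega, fun i hi1 hi2 => hbelow i hi1 (by omega), habove⟩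

theorem restrictLeft_eq_of_mem_comp (h : I ∈ comp I1 I2) :
    I.restrictLeft I1.n (by have := h.1; omega) = I1 := by
  obtain ⟨-, hleft, -⟩ := h
  refine ext rfl (funext₂ fun a b => propext ⟨fun ⟨ha, hb, hr⟩ => ?_, fun hr => ?_⟩)
  · have hs := I.supp a b hr
    exact (hleft a b hs.1 ha hs.2.2.1 hb).mp hr
  · have hs := I1.supp a b hr
    exact ⟨hs.2.1, hs.2.2.2, (hleft a b hs.1 hs.2.1 hs.2.2.1 hs.2.2.2).mpr hr⟩

theorem restrictRight_eq_of_mem_comp (h : I ∈ comp I1 I2) :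
    I.restrictRight (I1.n + 1) = I2 := by
  obtain ⟨hn, -, hright, -⟩ := h
  have hsize : I.n - (I1.n + 1) = I2.n := by omega
  refine ext hsize (funext₂ fun a b => propext ⟨fun ⟨ha1, ha2, hb1, hb2, hr⟩ => ?_, fun hr => ?_⟩)
  · rw [hsize] at ha2 hb2
    exact (hright a b ha1 ha2 hb1 hb2).mp (by rwa [add_assoc a, add_assoc b])
  · have hs := I2.supp a b hr
    refine ⟨hs.1, hsize ▸ hs.2.1, hs.2.2.1, hsize ▸ hs.2.2.2, ?_⟩
    rw [← add_assoc a, ← add_assoc b]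
    exact (hright a b hs.1 hs.2.1 hs.2.2.1 hs.2.2.2).mpr hr

end IntervalPoset

/-- Every interval-poset of size `n ≥ 1` lies in exactly one composition
`𝔹(I1,I2)` with `|I1| + |I2| = n − 1`; hence these compositions partition the
interval-posets of size `n`. -/
theorem stmt8 (n : ℕ) (hn : 1 ≤ n) (I : IntervalPoset) (hI : I.n = n) :
    ∃! p : IntervalPoset × IntervalPoset,
      p.1.n + p.2.n = n - 1 ∧ I ∈ comp p.1 p.2 := by
  obtain ⟨m, hroot⟩ := I.exists_isRoot (hI ▸ hn)
  obtain ⟨k, rfl⟩ : ∃ k, m = k + 1 := ⟨m - 1, by have := hroot.1; omega⟩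
  have hmem := IntervalPoset.mem_comp_restrict hroot
  refine ⟨(_, _), ⟨?_, hmem⟩, ?_⟩
  · have := hmem.1
    simp only [IntervalPoset.restrictLeft] at this ⊢
    omega
  rintro ⟨J1, J2⟩ ⟨-, hJ : I ∈ comp J1 J2⟩
  obtain rfl : J1.n = k := by have := (IntervalPoset.isRoot_of_mem_comp hJ).unique hroot; omega
  exact Prod.ext (IntervalPoset.restrictLeft_eq_of_mem_comp hJ).symm
    (IntervalPoset.restrictRight_eq_of_mem_comp hJ).symm
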